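/- arXiv:1604.00198 — 2 statements merged into one kernel-verified Lean document; each statement's English description precedes it below -/
import Mathlib

section
/- Let (Ω_1, 𝓜_1, μ_1) and (Ω_2, 𝓜_2, μ_2) be σ-finite measure spaces and let 1 ≤ p_1, p_2 < ∞. Then the iterated (mixed-norm) space L^{p_2}(μ_2; L^{p_1}(μ_1)) — the Bochner space of L^{p_1}(μ_1)-valued functions, whose norm is the mixed norm ( ∫ ( ∫ |f(x_1,x_2)|^{p_1} dμ_1(x_1) )^{p_2/p_1} dμ_2(x_2) )^{1/p_2} — has the metric approximation property. -/
/-!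
Simple functions are dense in `L^p(μ; E)` for `p < ∞`, so it suffices to approximate finitely
many simple functions at once. Their joint nonzero level sets form a finite partition into sets
`Bⱼ` of finite measure. Averaging over the pieces, `f ↦ ∑ⱼ 1_{Bⱼ} ⨍_{Bⱼ} f`, is a contraction of
`L^p` by Jensen's inequality, and it fixes the functions that are constant on every piece.
Following it by a finite-rank contraction `T` of `E` (applied pointwise) that nearly fixes the
finitely many values of the simple functions gives the required operator. So the metric
approximation property passes from `E` to `L^p(μ; E)`, and applying this twice, starting from `ℂ`,
gives the theorem.
-/

open MeasureTheory
open scoped ENNReal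

def HasMetricApproximationProperty (X : Type*) [NormedAddCommGroup X] [NormedSpace ℂ X] : Prop :=
  ∀ K : Set X, IsCompact K → ∀ ε : ℝ, 0 < ε →
    ∃ F : X →L[ℂ] X,
      FiniteDimensional ℂ (LinearMap.range (F : X →ₗ[ℂ] X)) ∧
      ‖F‖ ≤ 1 ∧ ∀ x ∈ K, ‖x - F x‖ < ε

open Function

namespace HasMetricApproximationProperty

variable {X : Type*} [NormedAddCommGroup X] [NormedSpace ℂ X]

theorem of_finiteDimensional [FiniteDimensional ℂ X] : HasMetricApproximationProperty X :=
  fun _ _ ε hε => ⟨ContinuousLinearMap.id ℂ X, inferInstance, ContinuousLinearMap.norm_id_le,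
    fun x _ => by simpa using hε⟩

theorem of_denseRange {ι : Type*} {g : ι → X} (hg : DenseRange g)
    (h : ∀ s : Finset ι, ∀ ε : ℝ, 0 < ε → ∃ F : X →L[ℂ] X,
      FiniteDimensional ℂ (LinearMap.range (F : X →ₗ[ℂ] X)) ∧ ‖F‖ ≤ 1 ∧
        ∀ i ∈ s, ‖g i - F (g i)‖ < ε) :
    HasMetricApproximationProperty X := by
  intro K hK ε hε
  have hε3 : 0 < ε / 3 := by positivity
  obtain ⟨s, hKs⟩ := hK.elim_finite_subcover (fun i => Metric.ball (g i) (ε / 3))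
    (fun _ => Metric.isOpen_ball) fun x _ => Set.mem_iUnion.2 (hg.exists_dist_lt x hε3)
  obtain ⟨F, hFfin, hF, hFs⟩ := h s (ε / 3) hε3
  refine ⟨F, hFfin, hF, fun x hx => ?_⟩
  obtain ⟨i, hi, hxi⟩ := Set.mem_iUnion₂.1 (hKs hx)
  rw [Metric.mem_ball, dist_eq_norm] at hxi
  have hFxi : ‖F (g i - x)‖ ≤ ‖x - g i‖ := by
    simpa [norm_sub_rev] using F.le_of_opNorm_le hF (g i - x)
  calc ‖x - F x‖ = ‖(x - g i) + (g i - F (g i)) + F (g i - x)‖ := by rw [map_sub]; abel_nf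
    _ ≤ ‖x - g i‖ + ‖g i - F (g i)‖ + ‖F (g i - x)‖ := norm_add₃_le
    _ < ε := by linarith [hFs i hi]

theorem exists_forall_sum_norm_sub_mul_lt (hE : HasMetricApproximationProperty X)
    {ι κ : Type*} [Fintype ι] [Finite κ] (c : κ → ι → X) {w : ι → ℝ} (hw : ∀ j, 0 ≤ w j)
    {ε : ℝ} (hε : 0 < ε) :
    ∃ T : X →L[ℂ] X, FiniteDimensional ℂ (LinearMap.range (T : X →ₗ[ℂ] X)) ∧ ‖T‖ ≤ 1 ∧
      ∀ k, ∑ j, ‖c k j - T (c k j)‖ * w j < ε := by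
  set W := ∑ j, w j
  have hW : 0 ≤ W := Finset.sum_nonneg fun j _ => hw j
  obtain ⟨T, hTfin, hT, hTc⟩ := hE (Set.range fun x : κ × ι => c x.1 x.2)
    (Set.finite_range _).isCompact (ε / (W + 1)) (by positivity)
  refine ⟨T, hTfin, hT, fun k => ?_⟩
  calc ∑ j, ‖c k j - T (c k j)‖ * w j ≤ ∑ j, ε / (W + 1) * w j := by
        gcongr with j
        · exact hw j
        · exact (hTc _ ⟨(k, j), rfl⟩).le
    _ = ε / (W + 1) * W := by rw [Finset.mul_sum]
    _ < ε := by
      rw [div_mul_eq_mul_div, div_lt_iff₀ (by positivity)]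
      exact mul_lt_mul_of_pos_left (lt_add_one W) hε

end HasMetricApproximationProperty

section DisjointIndicators

variable {Ω ι M N : Type*} [Fintype ι] {B : ι → Set Ω}

theorem Pairwise.sum_indicator_apply_of_mem [AddCommMonoid M] (hdisj : Pairwise (Disjoint on B))
    (f : ι → Ω → M) {j : ι} {ω : Ω} (hω : ω ∈ B j) :
    ∑ k, (B k).indicator (f k) ω = f j ω := by
  rw [Finset.sum_eq_single j (fun k _ hkj => Set.indicator_of_notMem
    (Set.disjoint_left.1 (hdisj hkj.symm) hω) _) (by simp), Set.indicator_of_mem hω]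

theorem Pairwise.apply_sum_indicator [AddCommMonoid M] [AddCommMonoid N]
    (hdisj : Pairwise (Disjoint on B)) (f : ι → Ω → M) {g : M → N} (hg : g 0 = 0) (ω : Ω) :
    g (∑ k, (B k).indicator (f k) ω) = ∑ k, (B k).indicator (fun x => g (f k x)) ω := by
  by_cases hω : ∃ j, ω ∈ B j
  · obtain ⟨j, hj⟩ := hω
    rw [hdisj.sum_indicator_apply_of_mem _ hj, hdisj.sum_indicator_apply_of_mem _ hj]
  · simp only [not_exists] at hω
    simp [Set.indicator_of_notMem (hω _), hg]

end DisjointIndicators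

namespace MeasureTheory

section LIntegral

variable {Ω ι M : Type*} [Fintype ι] {B : ι → Set Ω} [MeasurableSpace Ω] {μ : Measure Ω}
  [NormedAddCommGroup M]

theorem lintegral_enorm_sum_indicator_const_rpow (hB : ∀ j, MeasurableSet (B j))
    (hdisj : Pairwise (Disjoint on B)) (c : ι → M) {q : ℝ} (hq : 0 < q) :
    ∫⁻ ω, ‖∑ j, (B j).indicator (fun _ => c j) ω‖ₑ ^ q ∂μ = ∑ j, ‖c j‖ₑ ^ q * μ (B j) := by
  simp_rw [hdisj.apply_sum_indicator (fun j _ => c j) (g := fun x : M => ‖x‖ₑ ^ q)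
    (by simp [ENNReal.zero_rpow_of_pos hq])]
  rw [lintegral_finsetSum _ fun j _ => measurable_const.indicator (hB j)]
  exact Finset.sum_congr rfl fun j _ => lintegral_indicator_const (hB j) _

theorem sum_setLIntegral_le_lintegral (hB : ∀ j, MeasurableSet (B j))
    (hdisj : Pairwise (Disjoint on B)) (g : Ω → ℝ≥0∞) :
    ∑ j, ∫⁻ ω in B j, g ω ∂μ ≤ ∫⁻ ω, g ω ∂μ := by
  rw [← tsum_fintype (L := .unconditional _), ← lintegral_iUnion hB hdisj]
  exact setLIntegral_le_lintegral _ _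

end LIntegral

section Jensen

variable {Ω E : Type*} [MeasurableSpace Ω] {μ : Measure Ω} [NormedAddCommGroup E]
  [NormedSpace ℝ E]

theorem enorm_average_rpow_mul_measure_univ_le {q : ℝ} (hq : 1 ≤ q) {f : Ω → E}
    (hf : AEStronglyMeasurable f μ) :
    ‖⨍ x, f x ∂μ‖ₑ ^ q * μ Set.univ ≤ ∫⁻ x, ‖f x‖ₑ ^ q ∂μ := by
  have hq0 : 0 < q := by linarith
  rcases eq_or_ne μ 0 with rfl | hμ0
  · simp
  by_cases hμ : μ Set.univ = ∞
  · simp [average_eq', hμ, ENNReal.zero_rpow_of_pos hq0]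
  have : IsFiniteMeasure μ := ⟨lt_top_iff_ne_top.2 hμ⟩
  have : NeZero μ := ⟨hμ0⟩
  set ν := (μ Set.univ)⁻¹ • μ
  have hfν : AEStronglyMeasurable f ν := hf.smul_measure _
  have hJensen : ‖⨍ x, f x ∂μ‖ₑ ≤ eLpNorm' f q ν :=
    calc ‖⨍ x, f x ∂μ‖ₑ ≤ ∫⁻ x, ‖f x‖ₑ ∂ν := enorm_integral_le_lintegral_enorm f
      _ = eLpNorm' f 1 ν := by simp [eLpNorm']
      _ ≤ eLpNorm' f q ν := eLpNorm'_le_eLpNorm'_of_exponent_le one_pos hq ν hfν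
  calc ‖⨍ x, f x ∂μ‖ₑ ^ q * μ Set.univ ≤ eLpNorm' f q ν ^ q * μ Set.univ := by gcongr
    _ = ∫⁻ x, ‖f x‖ₑ ^ q ∂μ := by
      rw [← lintegral_rpow_enorm_eq_rpow_eLpNorm' hq0, lintegral_smul_measure, smul_eq_mul,
        mul_comm, ← mul_assoc, ENNReal.mul_inv_cancel (NeZero.ne _) hμ, one_mul]

end Jensen

section IndicatorConstLp

variable {Ω E : Type*} [MeasurableSpace Ω] {μ : Measure Ω} [NormedAddCommGroup E] {p : ℝ≥0∞}
  {s : Set Ω} (hs : MeasurableSet s) (hμs : μ s ≠ ∞)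

theorem indicatorConstLp_smul {𝕜 : Type*} [NormedRing 𝕜] [Module 𝕜 E] [IsBoundedSMul 𝕜 E]
    (a : 𝕜) (c : E) : indicatorConstLp p hs hμs (a • c) = a • indicatorConstLp p hs hμs c := by
  refine Lp.ext ?_
  filter_upwards [indicatorConstLp_coeFn (c := a • c), indicatorConstLp_coeFn (c := c),
    Lp.coeFn_smul a (indicatorConstLp p hs hμs c)] with ω h1 h2 h3
  rw [h1, h3, Pi.smul_apply, h2]
  by_cases hω : ω ∈ s <;> simp [hω]

theorem indicatorConstLp_eq_zero_of_measure_eq_zero (hμ0 : μ s = 0) (c : E) :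
    indicatorConstLp p hs hμs c = 0 := by
  refine Lp.ext ?_
  filter_upwards [indicatorConstLp_coeFn (c := c), Lp.coeFn_zero E p μ,
    measure_eq_zero_iff_ae_notMem.1 hμ0] with ω h1 h2 h3
  rw [h1, h2, Set.indicator_of_notMem h3, Pi.zero_apply]

variable (p) in
noncomputable def indicatorConstLpₗ (𝕜 : Type*) [NormedRing 𝕜] [Module 𝕜 E] [IsBoundedSMul 𝕜 E] :
    E →ₗ[𝕜] Lp E p μ where
  toFun := indicatorConstLp p hs hμs
  map_add' _ _ := indicatorConstLp_add.symm
  map_smul' := indicatorConstLp_smul hs hμs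

theorem coeFn_sum_indicatorConstLp {ι : Type*} [Fintype ι] {B : ι → Set Ω}
    (hB : ∀ j, MeasurableSet (B j)) (hBμ : ∀ j, μ (B j) ≠ ∞) (c : ι → E) :
    ⇑(∑ j, indicatorConstLp p (hB j) (hBμ j) (c j)) =ᵐ[μ]
      fun ω => ∑ j, (B j).indicator (fun _ => c j) ω := by
  filter_upwards [Lp.coeFn_fun_finsetSum Finset.univ fun j =>
      indicatorConstLp p (hB j) (hBμ j) (c j),
    ae_all_iff.2 fun j => indicatorConstLp_coeFn (hs := hB j) (hμs := hBμ j) (c := c j)]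
    with ω h1 h2
  rw [h1]
  exact Finset.sum_congr rfl fun j _ => h2 j

variable [Fact (1 ≤ p)] {𝕜 : Type*} [NontriviallyNormedField 𝕜] [NormedSpace 𝕜 E]

theorem _root_.ContinuousLinearMap.compLpL_indicatorConstLp {F : Type*} [NormedAddCommGroup F]
    [NormedSpace 𝕜 F] (T : E →L[𝕜] F) (c : E) :
    T.compLpL p μ (indicatorConstLp p hs hμs c) = indicatorConstLp p hs hμs (T c) := by
  refine Lp.ext ?_
  filter_upwards [T.coeFn_compLpL (indicatorConstLp p hs hμs c), indicatorConstLp_coeFn (c := c),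
    indicatorConstLp_coeFn (c := T c)] with ω h1 h2 h3
  rw [h1, h2, h3]
  by_cases hω : ω ∈ s <;> simp [hω]

variable (p 𝕜) in
noncomputable def Lp.setAverageₗ [NormedSpace ℝ E] [SMulCommClass ℝ 𝕜 E] : Lp E p μ →ₗ[𝕜] E where
  toFun f := ⨍ x in s, f x ∂μ
  map_add' f g := by
    simp only [setAverage_eq, ← smul_add]
    rw [← integral_add (integrableOn_Lp_of_measure_ne_top f Fact.out hμs)
      (integrableOn_Lp_of_measure_ne_top g Fact.out hμs)]
    exact congrArg _ (integral_congr_ae (ae_restrict_of_ae (Lp.coeFn_add f g)))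
  map_smul' a f := by
    rw [RingHom.id_apply, setAverage_eq, setAverage_eq,
      integral_congr_ae (ae_restrict_of_ae (Lp.coeFn_smul a f)), Pi.smul_def, integral_smul,
      smul_comm]

end IndicatorConstLp

section BlockAverage

variable {Ω E ι : Type*} [MeasurableSpace Ω] {μ : Measure Ω} [NormedAddCommGroup E] {p : ℝ≥0∞}
  [Fintype ι] {B : ι → Set Ω}

theorem eLpNorm_sum_indicator_setAverage_le [NormedSpace ℝ E] (hp : 1 ≤ p) (hp_top : p ≠ ∞)
    (hB : ∀ j, MeasurableSet (B j)) (hdisj : Pairwise (Disjoint on B)) {f : Ω → E}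
    (hf : AEStronglyMeasurable f μ) :
    eLpNorm (fun ω => ∑ j, (B j).indicator (fun _ => ⨍ x in B j, f x ∂μ) ω) p μ ≤
      eLpNorm f p μ := by
  have hp0 : p ≠ 0 := (zero_lt_one.trans_le hp).ne'
  have hq : 1 ≤ p.toReal := by simpa using ENNReal.toReal_mono hp_top hp
  rw [eLpNorm_eq_lintegral_rpow_enorm_toReal hp0 hp_top,
    eLpNorm_eq_lintegral_rpow_enorm_toReal hp0 hp_top,
    lintegral_enorm_sum_indicator_const_rpow hB hdisj _ (by linarith)]
  gcongr
  calc ∑ j, ‖⨍ x in B j, f x ∂μ‖ₑ ^ p.toReal * μ (B j)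
      ≤ ∑ j, ∫⁻ x in B j, ‖f x‖ₑ ^ p.toReal ∂μ := by
        gcongr with j
        simpa using enorm_average_rpow_mul_measure_univ_le hq hf.restrict
    _ ≤ ∫⁻ x, ‖f x‖ₑ ^ p.toReal ∂μ := sum_setLIntegral_le_lintegral hB hdisj _

variable (𝕜 : Type*) [NontriviallyNormedField 𝕜] [NormedSpace ℝ E] [NormedSpace 𝕜 E]
  [SMulCommClass ℝ 𝕜 E] [Fact (1 ≤ p)] (hp_top : p ≠ ∞) (hB : ∀ j, MeasurableSet (B j))
  (hBμ : ∀ j, μ (B j) ≠ ∞) (hdisj : Pairwise (Disjoint on B))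

noncomputable def blockAverageₗ : Lp E p μ →ₗ[𝕜] Lp E p μ :=
  ∑ j, (indicatorConstLpₗ p (hB j) (hBμ j) 𝕜).comp (Lp.setAverageₗ p (hBμ j) 𝕜)

theorem blockAverageₗ_apply (f : Lp E p μ) :
    blockAverageₗ 𝕜 hB hBμ f = ∑ j, indicatorConstLp p (hB j) (hBμ j) (⨍ x in B j, f x ∂μ) := by
  simp only [blockAverageₗ, LinearMap.sum_apply, LinearMap.comp_apply]
  rfl

include hp_top hdisj in
theorem norm_blockAverageₗ_apply_le (f : Lp E p μ) : ‖blockAverageₗ 𝕜 hB hBμ f‖ ≤ ‖f‖ := by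
  rw [blockAverageₗ_apply, Lp.norm_def, Lp.norm_def,
    eLpNorm_congr_ae (coeFn_sum_indicatorConstLp ..)]
  exact ENNReal.toReal_mono (Lp.eLpNorm_ne_top f)
    (eLpNorm_sum_indicator_setAverage_le Fact.out hp_top hB hdisj (Lp.aestronglyMeasurable f))

noncomputable def blockAverage : Lp E p μ →L[𝕜] Lp E p μ :=
  (blockAverageₗ 𝕜 hB hBμ).mkContinuous 1 fun f => by
    simpa using norm_blockAverageₗ_apply_le 𝕜 hp_top hB hBμ hdisj f

theorem blockAverage_apply (f : Lp E p μ) :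
    blockAverage 𝕜 hp_top hB hBμ hdisj f =
      ∑ j, indicatorConstLp p (hB j) (hBμ j) (⨍ x in B j, f x ∂μ) :=
  blockAverageₗ_apply 𝕜 hB hBμ f

theorem norm_blockAverage_le :
    ‖(blockAverage 𝕜 hp_top hB hBμ hdisj : Lp E p μ →L[𝕜] Lp E p μ)‖ ≤ 1 :=
  LinearMap.mkContinuous_norm_le _ zero_le_one _

theorem blockAverage_sum_indicatorConstLp [CompleteSpace E] (c : ι → E) :
    blockAverage 𝕜 hp_top hB hBμ hdisj (∑ j, indicatorConstLp p (hB j) (hBμ j) (c j)) =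
      ∑ j, indicatorConstLp p (hB j) (hBμ j) (c j) := by
  rw [blockAverage_apply]
  refine Finset.sum_congr rfl fun j _ => ?_
  by_cases hμ0 : μ (B j) = 0
  · rw [indicatorConstLp_eq_zero_of_measure_eq_zero _ _ hμ0,
      indicatorConstLp_eq_zero_of_measure_eq_zero _ _ hμ0]
  have hconst : ∀ᵐ x ∂μ, x ∈ B j →
      (∑ k, indicatorConstLp p (hB k) (hBμ k) (c k) : Lp E p μ) x = c j := by
    filter_upwards [coeFn_sum_indicatorConstLp hB hBμ c] with x hx hxB
    rw [hx, hdisj.sum_indicator_apply_of_mem _ hxB]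
  rw [setAverage_congr_fun (hB j) hconst, setAverage_const hμ0 (hBμ j)]

variable {𝕜} (T : E →L[𝕜] E)

theorem compLpL_blockAverage_apply (f : Lp E p μ) :
    (T.compLpL p μ ∘L blockAverage 𝕜 hp_top hB hBμ hdisj) f =
      ∑ j, indicatorConstLp p (hB j) (hBμ j) (T (⨍ x in B j, f x ∂μ)) := by
  simp only [ContinuousLinearMap.comp_apply, blockAverage_apply, map_sum,
    ContinuousLinearMap.compLpL_indicatorConstLp]

theorem finiteDimensional_range_compLpL_blockAverage
    [FiniteDimensional 𝕜 (LinearMap.range (T : E →ₗ[𝕜] E))] :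
    FiniteDimensional 𝕜 (LinearMap.range
      ((T.compLpL p μ ∘L blockAverage 𝕜 hp_top hB hBμ hdisj : Lp E p μ →L[𝕜] Lp E p μ) :
        Lp E p μ →ₗ[𝕜] Lp E p μ)) := by
  refine Submodule.finiteDimensional_of_le (S₂ := ⨆ j,
    (LinearMap.range (T : E →ₗ[𝕜] E)).map (indicatorConstLpₗ p (hB j) (hBμ j) 𝕜)) ?_
  rintro _ ⟨f, rfl⟩
  rw [ContinuousLinearMap.coe_coe, compLpL_blockAverage_apply]
  exact Submodule.sum_mem _ fun j _ => Submodule.mem_iSup_of_mem j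
    (Submodule.mem_map_of_mem (LinearMap.mem_range_self (T : E →ₗ[𝕜] E) _))

theorem norm_sum_indicatorConstLp_sub_compLpL_blockAverage_le [CompleteSpace E] (c : ι → E) :
    ‖∑ j, indicatorConstLp p (hB j) (hBμ j) (c j) -
        (T.compLpL p μ ∘L blockAverage 𝕜 hp_top hB hBμ hdisj)
          (∑ j, indicatorConstLp p (hB j) (hBμ j) (c j))‖ ≤
      ∑ j, ‖c j - T (c j)‖ * μ.real (B j) ^ (1 / p.toReal) := by
  have hp0 : p ≠ 0 := (zero_lt_one.trans_le Fact.out).ne'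
  rw [ContinuousLinearMap.comp_apply, blockAverage_sum_indicatorConstLp, map_sum,
    ← Finset.sum_sub_distrib]
  refine (norm_sum_le _ _).trans (Finset.sum_le_sum fun j _ => ?_)
  rw [ContinuousLinearMap.compLpL_indicatorConstLp, indicatorConstLp_sub,
    norm_indicatorConstLp hp0 hp_top]

end BlockAverage

namespace SimpleFunc

section Fibers

variable {Ω M : Type*} [MeasurableSpace Ω]

def pi {ι : Type*} [Finite ι] (f : ι → SimpleFunc Ω M) : SimpleFunc Ω (ι → M) where
  toFun ω i := f i ω
  measurableSet_fiber' v := by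
    convert MeasurableSet.iInter fun i => (f i).measurableSet_fiber (v i)
    ext ω
    simp [funext_iff]
  finite_range' := (Set.Finite.pi' fun i => (f i).finite_range).subset <| by
    rintro _ ⟨ω, rfl⟩ i
    exact ⟨ω, rfl⟩

variable [Zero M] [DecidableEq M] (Φ : SimpleFunc Ω M)

theorem pairwise_disjoint_fiber :
    Pairwise (Disjoint on fun y : Φ.range.erase 0 => Φ ⁻¹' {(y : M)}) :=
  fun _ _ hyz => Set.disjoint_left.2 fun _ hy hz => hyz (Subtype.ext (hy.symm.trans hz))

theorem apply_eq_sum_indicator_fiber {N : Type*} [AddCommMonoid N] (L : M → N) (hL : L 0 = 0)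
    (ω : Ω) : L (Φ ω) = ∑ y : Φ.range.erase 0, (Φ ⁻¹' {(y : M)}).indicator (fun _ => L y) ω := by
  by_cases h : Φ ω = 0
  · rw [h, hL]
    refine (Finset.sum_eq_zero fun y _ => Set.indicator_of_notMem (fun hy => ?_) _).symm
    exact Finset.ne_of_mem_erase y.2 (hy.symm.trans h)
  · exact (Φ.pairwise_disjoint_fiber.sum_indicator_apply_of_mem (fun y _ => L y)
      (j := ⟨Φ ω, Finset.mem_erase.2 ⟨h, Φ.mem_range_self ω⟩⟩) rfl).symm

end Fibers

section Lp

variable {Ω M E : Type*} [MeasurableSpace Ω] {μ : Measure Ω} {p : ℝ≥0∞} [NormedAddCommGroup M]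
  [DecidableEq M] [NormedAddCommGroup E] (Φ : SimpleFunc Ω M) (hp0 : p ≠ 0) (hp_top : p ≠ ∞)
  (hΦ : MemLp Φ p μ)

include hp0 hp_top hΦ in
theorem measure_fiber_ne_top (y : Φ.range.erase 0) : μ (Φ ⁻¹' {(y : M)}) ≠ ∞ :=
  (measure_preimage_lt_top_of_memLp hp0 hp_top Φ hΦ y (Finset.ne_of_mem_erase y.2)).ne

theorem eq_sum_indicatorConstLp_fiber (L : M → E) (hL : L 0 = 0) {g : Lp E p μ}
    (hg : g =ᵐ[μ] fun ω => L (Φ ω)) :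
    g = ∑ y : Φ.range.erase 0, indicatorConstLp p (Φ.measurableSet_fiber y)
      (Φ.measure_fiber_ne_top hp0 hp_top hΦ y) (L y) := by
  refine Lp.ext ?_
  filter_upwards [hg, coeFn_sum_indicatorConstLp (B := fun y : Φ.range.erase 0 => Φ ⁻¹' {(y : M)})
    (fun y => Φ.measurableSet_fiber y)
    (Φ.measure_fiber_ne_top hp0 hp_top hΦ) fun y => L y] with ω h1 h2
  rw [h1, h2, Φ.apply_eq_sum_indicator_fiber L hL]

end Lp

end SimpleFunc

end MeasureTheory

namespace HasMetricApproximationProperty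

variable {E : Type*} [NormedAddCommGroup E] [NormedSpace ℂ E]

theorem Lp {Ω : Type*} [MeasurableSpace Ω] {μ : Measure Ω} {p : ℝ≥0∞} [Fact (1 ≤ p)]
    [CompleteSpace E] (hp_top : p ≠ ∞) (hE : HasMetricApproximationProperty E) :
    HasMetricApproximationProperty (Lp E p μ) := by
  classical
  have hp0 : p ≠ 0 := (zero_lt_one.trans_le Fact.out).ne'
  refine of_denseRange (Lp.simpleFunc.denseRange hp_top) fun S ε hε => ?_
  let Φ := SimpleFunc.pi fun g : S => Lp.simpleFunc.toSimpleFunc g.1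
  have hΦ : MemLp Φ p μ := MemLp.of_eval fun g => Lp.simpleFunc.memLp g.1
  have hB := fun y : Φ.range.erase 0 => Φ.measurableSet_fiber y
  have hBμ := Φ.measure_fiber_ne_top hp0 hp_top hΦ
  obtain ⟨T, hTfin, hT, hTapprox⟩ := hE.exists_forall_sum_norm_sub_mul_lt
    (fun (g : S) (y : Φ.range.erase 0) => (y : S → E) g)
    (w := fun y => μ.real (Φ ⁻¹' {(y : S → E)}) ^ (1 / p.toReal)) (fun _ => by positivity) hε
  refine ⟨T.compLpL p μ ∘L blockAverage ℂ hp_top hB hBμ Φ.pairwise_disjoint_fiber,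
    finiteDimensional_range_compLpL_blockAverage .., ?_, fun g hg => ?_⟩
  · exact (ContinuousLinearMap.opNorm_comp_le _ _).trans
      (mul_le_one₀ (T.norm_compLpL_le.trans hT) (norm_nonneg _) (norm_blockAverage_le ..))
  · rw [Φ.eq_sum_indicatorConstLp_fiber hp0 hp_top hΦ (fun v => v ⟨g, hg⟩) rfl
      (Lp.simpleFunc.toSimpleFunc_eq_toFun g).symm]
    exact (norm_sum_indicatorConstLp_sub_compLpL_blockAverage_le ..).trans_lt (hTapprox ⟨g, hg⟩)

end HasMetricApproximationProperty

theorem mixed_norm_lp_metric_approximation_property_general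
    {Ω₁ Ω₂ : Type*} [MeasurableSpace Ω₁] [MeasurableSpace Ω₂]
    (μ₁ : Measure Ω₁) (μ₂ : Measure Ω₂)
    (p₁ p₂ : ℝ≥0∞) [Fact (1 ≤ p₁)] [Fact (1 ≤ p₂)] (hp₁ : p₁ ≠ ∞) (hp₂ : p₂ ≠ ∞) :
    HasMetricApproximationProperty (Lp (Lp ℂ p₁ μ₁) p₂ μ₂) :=
  .Lp hp₂ (.Lp hp₁ .of_finiteDimensional)

/-- For σ-finite measure spaces `(Ω₁, μ₁)`, `(Ω₂, μ₂)` and `1 ≤ p₁, p₂ < ∞`, the mixed-norm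
space `L^{p₂}(μ₂; L^{p₁}(μ₁))` has the metric approximation property. -/
theorem mixed_norm_lp_metric_approximation_property
    {Ω₁ Ω₂ : Type*} [MeasurableSpace Ω₁] [MeasurableSpace Ω₂]
    (μ₁ : Measure Ω₁) [SigmaFinite μ₁] (μ₂ : Measure Ω₂) [SigmaFinite μ₂]
    (p₁ p₂ : ℝ≥0∞) [Fact (1 ≤ p₁)] [Fact (1 ≤ p₂)] (hp₁ : p₁ ≠ ∞) (hp₂ : p₂ ≠ ∞) :
    HasMetricApproximationProperty (Lp (Lp ℂ p₁ μ₁) p₂ μ₂) :=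
  mixed_norm_lp_metric_approximation_property_general μ₁ μ₂ p₁ p₂ hp₁ hp₂
end

section
/- Let d ≥ 1, let 𝕋^d = (ℝ/ℤ)^d be the d-dimensional torus with its Haar (Lebesgue) probability measure, let 1 ≤ p, q < ∞ with 1/p + 1/p' = 1, and let 0 < r ≤ 1. Let α ∈ L^{p'}(𝕋^d) ∩ L^q(𝕋^d) and let σ : ℤ^d → ℂ satisfy Σ_{ξ ∈ ℤ^d} |σ(ξ)|^r < ∞. Then the operator α T_σ defined by (α T_σ f)(x) = α(x) Σ_{ξ ∈ ℤ^d} σ(ξ) 𝓕f(ξ) e^{2πi x·ξ}, where 𝓕f(ξ) = ∫_{𝕋^d} f(y) e^{−2πi y·ξ} dy, is a well-defined bounded linear operator from L^p(𝕋^d) to L^q(𝕋^d) and is r-nuclear. -/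
/-
Since `r ≤ 1`, `σ ∈ ℓ^r ⊆ ℓ^1`. On the probability space `𝕋^d` the Fourier coefficient functionals
`f ↦ 𝓕f(ξ)` have norm at most `1` on `L^p`, and the characters `e_ξ` have sup norm `1`, so
`T_σ = Σ_ξ σ(ξ) 𝓕(·)(ξ) ⊗ e_ξ` converges absolutely in operator norm from `L^p` to `C(𝕋^d)`.
Multiplication by `α ∈ L^q` is bounded from `C(𝕋^d)` to `L^q`, hence
`α T_σ = Σ_ξ σ(ξ) 𝓕(·)(ξ) ⊗ α e_ξ` with `‖σ(ξ) 𝓕(·)(ξ)‖^r ‖α e_ξ‖^r ≤ |σ(ξ)|^r ‖α‖_q^r`, which is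
summable.
-/

open MeasureTheory
open scoped ENNReal

/-- For `0 < r ≤ 1`, a bounded operator `T : X → Y` between Banach spaces is `r`-nuclear if
there exist a sequence `(x'_n)` in the dual `X'` and a sequence `(y_n)` in `Y` with
`Σ_n ‖x'_n‖^r ‖y_n‖^r < ∞` and `T x = Σ_n ⟨x, x'_n⟩ y_n` for all `x ∈ X`. -/
def IsRNuclear (r : ℝ) {X Y : Type*} [NormedAddCommGroup X] [NormedSpace ℂ X]
    [NormedAddCommGroup Y] [NormedSpace ℂ Y] (T : X →L[ℂ] Y) : Prop :=
  ∃ (x' : ℕ → (X →L[ℂ] ℂ)) (y : ℕ → Y),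
    Summable (fun n => ‖x' n‖ ^ r * ‖y n‖ ^ r) ∧
    ∀ x : X, HasSum (fun n => (x' n x) • y n) (T x)

/-- The character `x ↦ e^{2πi x·ξ}` on the torus `𝕋^d = (ℝ/ℤ)^d`, for `ξ ∈ ℤ^d`. -/
noncomputable def torusChar {d : ℕ} (ξ : Fin d → ℤ) (x : Fin d → AddCircle (1 : ℝ)) : ℂ :=
  ∏ i, fourier (ξ i) (x i)

/-- The Fourier coefficient `𝓕f(ξ) = ∫_{𝕋^d} f(y) e^{-2πi y·ξ} dy`. -/
noncomputable def torusFourierCoeff {d : ℕ} (f : (Fin d → AddCircle (1 : ℝ)) → ℂ)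
    (ξ : Fin d → ℤ) : ℂ :=
  ∫ y, f y * torusChar (-ξ) y

open UnitAddTorus

theorem summable_norm_of_summable_norm_rpow {ι E : Type*} [NormedAddCommGroup E] {f : ι → E}
    {r : ℝ} (hr0 : 0 < r) (hr1 : r ≤ 1) (hf : Summable fun i => ‖f i‖ ^ r) :
    Summable fun i => ‖f i‖ := by
  have hf' : Memℓp f (ENNReal.ofReal r) :=
    (memℓp_gen_iff (by rwa [ENNReal.toReal_ofReal hr0.le])).2 (by simpa [hr0.le] using hf)
  simpa using (memℓp_gen_iff (by simp)).1 (hf'.of_exponent_ge (ENNReal.ofReal_le_one.2 hr1))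

theorem hasSum_tsum_smulRight_apply {ι 𝕜 E F : Type*} [NontriviallyNormedField 𝕜]
    [NormedAddCommGroup E] [NormedSpace 𝕜 E] [NormedAddCommGroup F] [NormedSpace 𝕜 F]
    [CompleteSpace F] (x' : ι → StrongDual 𝕜 E) (y : ι → F)
    (h : Summable fun i => ‖x' i‖ * ‖y i‖) (x : E) :
    HasSum (fun i => x' i x • y i) ((∑' i, (x' i).smulRight (y i)) x) := by
  have hs : Summable fun i => (x' i).smulRight (y i) :=
    .of_norm (by simpa only [ContinuousLinearMap.norm_smulRight_apply] using h)
  exact hs.hasSum.mapL (ContinuousLinearMap.apply 𝕜 F x)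

theorem Function.Injective.extend_zero_map₂ {ι κ A B C : Type*} [Zero A] [Zero B] [Zero C]
    {e : ι → κ} (he : e.Injective) (F : A → B → C) (hF : F 0 0 = 0) (a : ι → A) (b : ι → B) :
    (fun k => F (Function.extend e a 0 k) (Function.extend e b 0 k)) =
      Function.extend e (fun i => F (a i) (b i)) 0 := by
  funext k
  by_cases hk : ∃ i, e i = k
  · obtain ⟨i, rfl⟩ := hk
    simp only [he.extend_apply]
  · simp only [Function.extend_apply' _ _ _ hk, Pi.zero_apply, hF]

theorem isRNuclear_of_hasSum {ι X Y : Type*} [Countable ι] [NormedAddCommGroup X]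
    [NormedSpace ℂ X] [NormedAddCommGroup Y] [NormedSpace ℂ Y] {r : ℝ} (hr : 0 < r)
    (T : X →L[ℂ] Y) (x' : ι → StrongDual ℂ X) (y : ι → Y)
    (hs : Summable fun i => ‖x' i‖ ^ r * ‖y i‖ ^ r)
    (hT : ∀ x, HasSum (fun i => x' i x • y i) (T x)) : IsRNuclear r T := by
  obtain ⟨e, he⟩ := Countable.exists_injective_nat ι
  refine ⟨Function.extend e x' 0, Function.extend e y 0, ?_, fun x => ?_⟩
  · rw [he.extend_zero_map₂ (fun φ v => ‖φ‖ ^ r * ‖v‖ ^ r) (by simp [Real.zero_rpow hr.ne'])]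
    exact (summable_extend_zero he).2 hs
  · rw [he.extend_zero_map₂ (fun (φ : StrongDual ℂ X) (v : Y) => φ x • v) (by simp)]
    exact (hasSum_extend_zero he).2 (hT x)

section IntegralMul

variable {X : Type*} [MeasurableSpace X] {p : ℝ≥0∞} [Fact (1 ≤ p)] {μ : Measure X}

theorem Lp.integral_norm_le_norm [IsProbabilityMeasure μ] {E : Type*} [NormedAddCommGroup E]
    (f : Lp E p μ) :
    ∫ x, ‖f x‖ ∂μ ≤ ‖f‖ := by
  rw [integral_norm_eq_lintegral_enorm (Lp.aestronglyMeasurable f),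
    ← eLpNorm_one_eq_lintegral_enorm, Lp.norm_def]
  exact ENNReal.toReal_mono (Lp.eLpNorm_ne_top f)
    (eLpNorm_le_eLpNorm_of_exponent_le Fact.out (Lp.aestronglyMeasurable f))

variable [TopologicalSpace X] [OpensMeasurableSpace X] [CompactSpace X]

theorem Lp.integrable_mul_continuousMap [IsFiniteMeasure μ] (f : Lp ℂ p μ) (g : C(X, ℂ)) :
    Integrable (fun x => f x * g x) μ :=
  ((Lp.memLp f).integrable Fact.out).mul_bdd
    g.continuous.aestronglyMeasurable (ae_of_all _ g.norm_coe_le_norm)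

variable [IsProbabilityMeasure μ]

variable (p μ) in
noncomputable def integralMulCLM (g : C(X, ℂ)) : StrongDual ℂ (Lp ℂ p μ) :=
  LinearMap.mkContinuous
    { toFun f := ∫ x, f x * g x ∂μ
      map_add' f₁ f₂ := by
        rw [← integral_add (Lp.integrable_mul_continuousMap f₁ g)
          (Lp.integrable_mul_continuousMap f₂ g)]
        refine integral_congr_ae ?_
        filter_upwards [Lp.coeFn_add f₁ f₂] with x hx
        simp only [hx, Pi.add_apply, add_mul]
      map_smul' c f := by
        rw [RingHom.id_apply, smul_eq_mul, ← integral_const_mul]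
        refine integral_congr_ae ?_
        filter_upwards [Lp.coeFn_smul c f] with x hx
        simp only [hx, Pi.smul_apply, smul_eq_mul, mul_assoc] }
    ‖g‖ fun f => calc
      ‖∫ x, f x * g x ∂μ‖ ≤ ∫ x, ‖g‖ * ‖f x‖ ∂μ :=
        norm_integral_le_of_norm_le (((Lp.memLp f).integrable Fact.out).norm.const_mul _)
          (ae_of_all _ fun x => by rw [norm_mul, mul_comm]; gcongr; exact g.norm_coe_le_norm x)
      _ = ‖g‖ * ∫ x, ‖f x‖ ∂μ := integral_const_mul _ _
      _ ≤ ‖g‖ * ‖f‖ := by gcongr; exact Lp.integral_norm_le_norm f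

theorem norm_integralMulCLM_le (g : C(X, ℂ)) : ‖integralMulCLM p μ g‖ ≤ ‖g‖ :=
  LinearMap.mkContinuous_norm_le _ (norm_nonneg g) _

end IntegralMul

section MulLp

variable {X : Type*} [MeasurableSpace X] [TopologicalSpace X] [BorelSpace X] [CompactSpace X]
  {μ : Measure X} [IsFiniteMeasure μ] {q : ℝ≥0∞} [Fact (1 ≤ q)]

noncomputable def mulLpCLM (α : Lp ℂ q μ) : C(X, ℂ) →L[ℂ] Lp ℂ q μ :=
  ((ContinuousLinearMap.mul ℂ ℂ).holderL μ q ∞ q α).comp (ContinuousMap.toLp ∞ μ ℂ)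

theorem coeFn_mulLpCLM (α : Lp ℂ q μ) (g : C(X, ℂ)) :
    mulLpCLM α g =ᵐ[μ] fun x => α x * g x := by
  filter_upwards [(ContinuousLinearMap.mul ℂ ℂ).coeFn_holder (r := q) α
      (ContinuousMap.toLp ∞ μ ℂ g),
    ContinuousMap.coeFn_toLp (p := ∞) (𝕜 := ℂ) μ g] with x hx hg
  simp only [mulLpCLM, ContinuousLinearMap.comp_apply, ContinuousLinearMap.holderL_apply_apply,
    hx, hg, ContinuousLinearMap.mul_apply']

end MulLp

instance : IsProbabilityMeasure (volume : Measure (AddCircle (1 : ℝ))) :=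
  ⟨by simp [AddCircle.measure_univ]⟩

theorem torusFourierCoeff_eq_integralMulCLM {d : ℕ} {p : ℝ≥0∞} [Fact (1 ≤ p)]
    (f : Lp ℂ p (volume : Measure (Fin d → AddCircle (1 : ℝ)))) (ξ : Fin d → ℤ) :
    torusFourierCoeff f ξ = integralMulCLM p volume (mFourier (-ξ)) f :=
  rfl

theorem coe_mFourier_eq_torusChar {d : ℕ} (ξ : Fin d → ℤ) : ⇑(mFourier ξ) = torusChar ξ :=
  rfl

theorem multiplier_times_multiplication_isRNuclear_general
    (d : ℕ)
    (p q : ℝ≥0∞) [Fact (1 ≤ p)] [Fact (1 ≤ q)]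
    (r : ℝ) (hr0 : 0 < r) (hr1 : r ≤ 1)
    (α : (Fin d → AddCircle (1 : ℝ)) → ℂ)
    (hα2 : MemLp α q (volume : Measure (Fin d → AddCircle (1 : ℝ))))
    (σ : (Fin d → ℤ) → ℂ) (hσ : Summable fun ξ => ‖σ ξ‖ ^ r) :
    ∃ T : Lp ℂ p (volume : Measure (Fin d → AddCircle (1 : ℝ))) →L[ℂ] Lp ℂ q volume,
      (∀ f : Lp ℂ p (volume : Measure (Fin d → AddCircle (1 : ℝ))),
        ∀ᵐ x ∂(volume : Measure (Fin d → AddCircle (1 : ℝ))),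
          (T f : (Fin d → AddCircle (1 : ℝ)) → ℂ) x =
            α x * ∑' ξ : Fin d → ℤ,
              σ ξ * torusFourierCoeff (f : (Fin d → AddCircle (1 : ℝ)) → ℂ) ξ * torusChar ξ x) ∧
      IsRNuclear r T := by
  set φ : (Fin d → ℤ) → StrongDual ℂ (Lp ℂ p (volume : Measure (Fin d → AddCircle (1 : ℝ)))) :=
    fun ξ => σ ξ • integralMulCLM p volume (mFourier (-ξ))
  have hφ (ξ : Fin d → ℤ) : ‖φ ξ‖ ≤ ‖σ ξ‖ := by
    simpa [φ, norm_smul, mFourier_norm] using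
      mul_le_mul_of_nonneg_left (norm_integralMulCLM_le (p := p) (μ := volume) (mFourier (-ξ)))
        (norm_nonneg (σ ξ))
  have hφ_summable : Summable fun ξ => ‖φ ξ‖ * ‖mFourier ξ‖ :=
    .of_nonneg_of_le (fun _ => by positivity) (fun ξ => by simpa [mFourier_norm] using hφ ξ)
      (summable_norm_of_summable_norm_rpow hr0 hr1 hσ)
  set S := ∑' ξ, (φ ξ).smulRight (mFourier ξ)
  have hS (f : Lp ℂ p volume) : HasSum (fun ξ => φ ξ f • mFourier ξ) (S f) :=
    hasSum_tsum_smulRight_apply φ mFourier hφ_summable f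
  set M := mulLpCLM (hα2.toLp α)
  refine ⟨M ∘L S, fun f => ?_,
    isRNuclear_of_hasSum hr0 _ φ (fun ξ => M (mFourier ξ)) ?_ fun f => ?_⟩
  · filter_upwards [coeFn_mulLpCLM (hα2.toLp α) (S f), hα2.coeFn_toLp] with x hx hαx
    -- the series converges uniformly, so it may be evaluated at `x` termwise
    rw [ContinuousLinearMap.comp_apply, hx, hαx, ← (hS f).tsum_eq,
      ← ContinuousMap.tsum_apply (hS f).summable]
    refine congrArg (α x * ·) (tsum_congr fun ξ => ?_)
    simp only [φ, ContinuousMap.smul_apply, smul_apply, smul_eq_mul,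
      torusFourierCoeff_eq_integralMulCLM, coe_mFourier_eq_torusChar]
  · refine .of_nonneg_of_le (fun _ => by positivity) (fun ξ => ?_) (hσ.mul_right (‖M‖ ^ r))
    gcongr
    · exact hφ ξ
    · simpa [mFourier_norm] using M.le_opNorm (mFourier ξ)
  · have := (hS f).mapL M
    simp only [map_smul] at this
    exact this

/-- For `α ∈ L^{p'}(𝕋^d) ∩ L^q(𝕋^d)` and `σ : ℤ^d → ℂ` with `Σ_ξ |σ(ξ)|^r < ∞`, the operator
`α T_σ : f ↦ α · Σ_ξ σ(ξ) 𝓕f(ξ) e^{2πi x·ξ}` is a well-defined bounded operator from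
`L^p(𝕋^d)` to `L^q(𝕋^d)` and is `r`-nuclear. -/
theorem multiplier_times_multiplication_isRNuclear
    (d : ℕ) (hd : 1 ≤ d)
    (p p' q : ℝ≥0∞) [Fact (1 ≤ p)] [Fact (1 ≤ q)] [Fact (1 ≤ p')]
    (hp : p ≠ ∞) (hq : q ≠ ∞) (hpp' : 1 / p + 1 / p' = 1)
    (r : ℝ) (hr0 : 0 < r) (hr1 : r ≤ 1)
    (α : (Fin d → AddCircle (1 : ℝ)) → ℂ)
    (hα1 : MemLp α p' (volume : Measure (Fin d → AddCircle (1 : ℝ))))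
    (hα2 : MemLp α q (volume : Measure (Fin d → AddCircle (1 : ℝ))))
    (σ : (Fin d → ℤ) → ℂ) (hσ : Summable fun ξ => ‖σ ξ‖ ^ r) :
    ∃ T : Lp ℂ p (volume : Measure (Fin d → AddCircle (1 : ℝ))) →L[ℂ] Lp ℂ q volume,
      (∀ f : Lp ℂ p (volume : Measure (Fin d → AddCircle (1 : ℝ))),
        ∀ᵐ x ∂(volume : Measure (Fin d → AddCircle (1 : ℝ))),
          (T f : (Fin d → AddCircle (1 : ℝ)) → ℂ) x =
            α x * ∑' ξ : Fin d → ℤ,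
              σ ξ * torusFourierCoeff (f : (Fin d → AddCircle (1 : ℝ)) → ℂ) ξ * torusChar ξ x) ∧
      IsRNuclear r T :=
  multiplier_times_multiplication_isRNuclear_general d p q r hr0 hr1 α hα2 σ hσ
end
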